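/- Assume p ≥ 3. Let e ≥ 0 be an integer, q = p^e, and define φ*(t) = [[1, t^q, (1/2)t^{2q}, 0], [0, 1, t^q, 0], [0, 0, 1, 0], [0, 0, 0, 1]] for t ∈ k and ω*(u) = diag(u^{3q}, u^{q}, u^{−q}, u^{−3q}) for u ∈ kˣ. Then there exists no map φ⁻ : k → SL(4,k) with the following properties: φ⁻(s+s') = φ⁻(s)·φ⁻(s') for all s,s' ∈ k; every matrix entry of φ⁻(s) is a polynomial function of s; φ⁻(s) is lower triangular for every s ∈ k; and φ*(t)·φ⁻(s) = φ⁻(s/(1+t·s)) · ω*(1+t·s) · φ*(t/(1+t·s)) for all t,s ∈ k with 1+t·s ≠ 0. -/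

import Mathlib

open Matrix Polynomial

/-!
The entry `d(s) = φ⁻(s)₃₃` is a polynomial additive character of `k`: lower triangularity makes the
diagonal of a product the product of the diagonals. A nowhere-vanishing polynomial over an
algebraically closed field is constant, so `d = 1`. Comparing the `(3,3)` entries of the two sides
of the relation, where `φ*` acts trivially and `ω*` contributes `u^{-3q}`, then forces
`u^{3q} = 1` for every `u ≠ 0`, which an infinite field does not allow.
-/

/-- The unipotent one-parameter subgroup `φ*` of form (III). -/
noncomputable def phiStarIII (k : Type*) [Field k] (q : ℕ) (t : k) : Matrix (Fin 4) (Fin 4) k :=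
  !![1, t ^ q, (1 / 2 : k) * t ^ (2 * q), 0;
     0, 1, t ^ q, 0;
     0, 0, 1, 0;
     0, 0, 0, 1]

/-- The cocharacter `ω*(u) = diag(u^{3q}, u^{q}, u^{−q}, u^{−3q})`. -/
noncomputable def omegaStarI (k : Type*) [Field k] (q : ℕ) (u : kˣ) :
    Matrix (Fin 4) (Fin 4) k :=
  Matrix.diagonal
    ![(u : k) ^ (3 * q : ℤ), (u : k) ^ (q : ℤ), (u : k) ^ (-(q : ℤ)), (u : k) ^ (-(3 * q : ℤ))]

theorem Matrix.mul_apply_self_of_blockTriangular_toDual {n R : Type*} [Fintype n] [LinearOrder n]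
    [NonUnitalNonAssocSemiring R] {A B : Matrix n n R} (hA : A.BlockTriangular OrderDual.toDual)
    (hB : B.BlockTriangular OrderDual.toDual) (i : n) : (A * B) i i = A i i * B i i := by
  rw [mul_apply, Finset.sum_eq_single i]
  · intro j _ hji
    rcases hji.lt_or_gt with hlt | hgt
    · rw [hB hlt, mul_zero]
    · rw [hA hgt, zero_mul]
  · simp

theorem AddChar.eq_one_of_eq_eval {k : Type*} [Field k] [IsAlgClosed k] (ψ : AddChar k k)
    {P : k[X]} (hP : ∀ s, ψ s = P.eval s) (s : k) : ψ s = 1 := by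
  have hdeg : P.degree = 0 := by
    by_contra hne
    obtain ⟨x, hx⟩ := IsAlgClosed.exists_root P hne
    exact (ψ.val_isUnit x).ne_zero ((hP x).trans hx)
  obtain ⟨c, rfl⟩ : ∃ c, P = C c := ⟨_, eq_C_of_degree_le_zero hdeg.le⟩
  rw [hP, eval_C, ← eval_C (a := c) (x := 0), ← hP, ψ.map_zero_eq_one]

theorem Matrix.SpecialLinearGroup.apply_self_eq_one_of_eval_of_blockTriangular {k n : Type*}
    [Field k] [IsAlgClosed k] [Fintype n] [DecidableEq n] [LinearOrder n]
    (φ : k → SpecialLinearGroup n k) (hadd : ∀ s s', φ (s + s') = φ s * φ s') (i : n)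
    (hpoly : ∃ P : k[X], ∀ s, (φ s).1 i i = P.eval s)
    (hlow : ∀ s, (φ s).1.BlockTriangular OrderDual.toDual) (s : k) : (φ s).1 i i = 1 := by
  have hzero : φ 0 = 1 := (mul_eq_left (a := φ 0)).mp (by rw [← hadd, add_zero])
  let ψ : AddChar k k :=
    { toFun := fun s => (φ s).1 i i
      map_zero_eq_one' := by simp [hzero]
      map_add_eq_mul' := fun s s' => by
        rw [hadd, SpecialLinearGroup.coe_mul,
          mul_apply_self_of_blockTriangular_toDual (hlow s) (hlow s')] }
  obtain ⟨P, hP⟩ := hpoly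
  exact ψ.eq_one_of_eq_eval hP s

theorem exists_ne_zero_pow_ne_one (K : Type*) [Field K] [Infinite K] {n : ℕ} (hn : n ≠ 0) :
    ∃ x : K, x ≠ 0 ∧ x ^ n ≠ 1 := by
  by_contra! h
  refine X_pow_sub_C_ne_zero (Nat.pos_of_ne_zero hn) (1 : K) (eq_zero_of_infinite_isRoot _ ?_)
  refine (Set.finite_singleton (0 : K)).infinite_compl.mono fun x hx => ?_
  simp [h x hx]

section Entry33

variable {k : Type*} [Field k] (q : ℕ) (M : Matrix (Fin 4) (Fin 4) k)

theorem phiStarIII_mul_apply_three_three (t : k) : (phiStarIII k q t * M) 3 3 = M 3 3 := by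
  simp [phiStarIII, mul_apply, Fin.sum_univ_four]

theorem mul_phiStarIII_apply_three_three (t : k) : (M * phiStarIII k q t) 3 3 = M 3 3 := by
  simp [phiStarIII, mul_apply, Fin.sum_univ_four]

theorem mul_omegaStarI_apply_three_three (u : kˣ) :
    (M * omegaStarI k q u) 3 3 = M 3 3 * ((u : k) ^ (3 * q))⁻¹ := by
  simp [omegaStarI, mul_diagonal, _root_.zpow_neg, ← zpow_natCast]

end Entry33

theorem stmt6_general {k : Type*} [Field k] [IsAlgClosed k] {p : ℕ}
    (hp : 3 ≤ p) (e : ℕ) :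
    ¬∃ φm : k → SpecialLinearGroup (Fin 4) k,
      (∀ s s' : k, φm (s + s') = φm s * φm s') ∧
        (∀ i j : Fin 4, ∃ P : Polynomial k, ∀ s : k, (φm s).1 i j = P.eval s) ∧
        (∀ (s : k) (i j : Fin 4), i < j → (φm s).1 i j = 0) ∧
        ∀ (t s : k) (h : 1 + t * s ≠ 0),
          phiStarIII k (p ^ e) t * (φm s).1 =
            (φm (s / (1 + t * s))).1 * omegaStarI k (p ^ e) (Units.mk0 (1 + t * s) h) *
              phiStarIII k (p ^ e) (t / (1 + t * s)) := by
  rintro ⟨φm, hadd, hpoly, hlow, hrel⟩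
  have hdiag (s : k) : (φm s).1 3 3 = 1 :=
    SpecialLinearGroup.apply_self_eq_one_of_eval_of_blockTriangular φm hadd 3 (hpoly 3 3)
      (fun s _ _ hij => hlow s _ _ hij) s
  obtain ⟨x, hx0, hx⟩ := exists_ne_zero_pow_ne_one k (n := 3 * p ^ e)
    (mul_ne_zero three_ne_zero (pow_ne_zero e (by omega)))
  have hunit : 1 + 1 * (x - 1) ≠ 0 := by simpa using hx0
  have h33 := congrFun₂ (hrel 1 (x - 1) hunit) 3 3
  rw [phiStarIII_mul_apply_three_three, mul_phiStarIII_apply_three_three,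
    mul_omegaStarI_apply_three_three, hdiag, hdiag, one_mul, Units.val_mk0] at h33
  exact hx (by simpa using h33)

/-- **form (III).** For `p ≥ 3`, there is no additive lower-triangular
one-parameter subgroup `φ⁻` of `SL(4,k)` with polynomial entries satisfying the opposite
Bruhat relation against `φ*` and `ω*` of form (III). -/
theorem stmt6 {k : Type*} [Field k] [IsAlgClosed k] {p : ℕ} [Fact p.Prime] [CharP k p]
    (hp : 3 ≤ p) (e : ℕ) :
    ¬∃ φm : k → SpecialLinearGroup (Fin 4) k,
      (∀ s s' : k, φm (s + s') = φm s * φm s') ∧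
        (∀ i j : Fin 4, ∃ P : Polynomial k, ∀ s : k, (φm s).1 i j = P.eval s) ∧
        (∀ (s : k) (i j : Fin 4), i < j → (φm s).1 i j = 0) ∧
        ∀ (t s : k) (h : 1 + t * s ≠ 0),
          phiStarIII k (p ^ e) t * (φm s).1 =
            (φm (s / (1 + t * s))).1 * omegaStarI k (p ^ e) (Units.mk0 (1 + t * s) h) *
              phiStarIII k (p ^ e) (t / (1 + t * s)) :=
  stmt6_general hp e
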